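/- Let f : {−1,1}^n → {−1,1} be computable by a decision tree with t leaves. Then for every τ > 0, Σ_{S : |S| ≥ log₂(t²/τ)} \hat{f}(S)² ≤ τ, where \hat{f}(S) are the Fourier coefficients of f under the uniform distribution. -/

import Mathlib

/-!
Weight a decision tree by a product function `∏ i, g i (x i)` with factors in `[0, 1]`.
Splitting at the root, the weighted tree is the sum of the two weighted subtrees, the
`i`-th factor of each weight being cut down to its branch; so a subadditive even functional
that is at most `1` on such weights is at most the number of leaves on weighted trees.
The Fourier coefficients of a product function factor over the coordinates, every factor
indexed by `i ∈ S` being at most `1/2` in absolute value, and the two factors of a coordinate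
summing to at most `1`; this gives `|f̂(S)| ≤ t / 2^|S|` and `∑ |f̂(S)| ≤ t` for a tree `f`
with `t` leaves. Above the threshold `|f̂(S)| ≤ τ / t`, so `∑ f̂(S)² ≤ (τ / t) ∑ |f̂(S)| ≤ τ`.
-/

open Finset

/-- Binary decision trees over n Boolean variables with ±1 leaves. -/
inductive DTree (n : ℕ) : Type
  | leaf (b : Bool) : DTree n
  | node (i : Fin n) (l r : DTree n) : DTree n

namespace DTree

/-- Evaluation of a decision tree, with leaves taking values ±1. -/
def eval {n : ℕ} : DTree n → (Fin n → Bool) → ℝ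
  | leaf b, _ => if b then 1 else -1
  | node i l r, x => if x i then l.eval x else r.eval x

/-- Number of leaves. -/
def leaves {n : ℕ} : DTree n → ℕ
  | leaf _ => 1
  | node _ l r => l.leaves + r.leaves

/-- Depth. -/
def depth {n : ℕ} : DTree n → ℕ
  | leaf _ => 0
  | node _ l r => max l.depth r.depth + 1

end DTree

/-- Fourier coefficient of f : {−1,1}^n → ℝ under the uniform distribution,
with Boolean b encoding the point (b = true ↦ 1, b = false ↦ −1). -/
noncomputable def fourierU {n : ℕ} (f : (Fin n → Bool) → ℝ) (S : Finset (Fin n)) : ℝ :=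
  (∑ x : Fin n → Bool, f x * ∏ i ∈ S, (if x i then (1 : ℝ) else -1)) / 2 ^ n

section

variable {n : ℕ}

theorem fourierU_add (f h : (Fin n → Bool) → ℝ) (S : Finset (Fin n)) :
    fourierU (f + h) S = fourierU f S + fourierU h S := by
  simp only [fourierU, Pi.add_apply, add_mul, sum_add_distrib, add_div]

theorem fourierU_neg (f : (Fin n → Bool) → ℝ) (S : Finset (Fin n)) :
    fourierU (-f) S = -fourierU f S := by
  simp only [fourierU, Pi.neg_apply, neg_mul, sum_neg_distrib, neg_div]

def productFn (g : Fin n → Bool → ℝ) (x : Fin n → Bool) : ℝ := ∏ i, g i (x i)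

theorem fourierU_productFn (g : Fin n → Bool → ℝ) (S : Finset (Fin n)) :
    fourierU (productFn g) S =
      ∏ i, if i ∈ S then (g i true - g i false) / 2 else (g i true + g i false) / 2 := by
  classical
  set h : Fin n → Bool → ℝ := fun i b => g i b * if i ∈ S then (if b then 1 else -1) else 1
  have hsum : ∑ x : Fin n → Bool, productFn g x * ∏ i ∈ S, (if x i then (1 : ℝ) else -1)
      = ∑ x : Fin n → Bool, ∏ i, h i (x i) := Fintype.sum_congr _ _ fun x => by
    rw [productFn, ← Fintype.prod_ite_mem S, ← prod_mul_distrib]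
  rw [fourierU, hsum, ← Fintype.prod_sum, ← Fin.prod_const, ← prod_div_distrib]
  refine prod_congr rfl fun i _ => ?_
  split_ifs <;> simp [h, *, add_div, sub_eq_add_neg, neg_div]

theorem abs_fourierU_productFn_le {g : Fin n → Bool → ℝ}
    (hg : ∀ i b, g i b ∈ Set.Icc (0 : ℝ) 1) (S : Finset (Fin n)) :
    |fourierU (productFn g) S| ≤ (2 ^ S.card)⁻¹ := by
  classical
  rw [fourierU_productFn, abs_prod, ← inv_pow, ← prod_const, ← Fintype.prod_ite_mem S]
  refine prod_le_prod (fun i _ => abs_nonneg _) fun i _ => ?_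
  obtain ⟨h0, h1⟩ := hg i true
  obtain ⟨h0', h1'⟩ := hg i false
  split_ifs <;> rw [abs_le] <;> constructor <;> linarith

theorem sum_abs_fourierU_productFn_le {g : Fin n → Bool → ℝ}
    (hg : ∀ i b, g i b ∈ Set.Icc (0 : ℝ) 1) :
    ∑ S, |fourierU (productFn g) S| ≤ 1 := by
  classical
  set u : Fin n → ℝ := fun i => |(g i true - g i false) / 2|
  set v : Fin n → ℝ := fun i => |(g i true + g i false) / 2|
  have hsplit : ∀ S, |fourierU (productFn g) S| = (∏ i ∈ S, u i) * ∏ i ∈ Sᶜ, v i := fun S => by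
    rw [fourierU_productFn, abs_prod, ← prod_mul_prod_compl S]
    congr 1 <;> refine prod_congr rfl fun i hi => ?_ <;> simp_all [u, v]
  rw [Fintype.sum_congr _ _ hsplit, ← Fintype.prod_add]
  refine prod_le_one (fun i _ => by positivity) fun i _ => ?_
  obtain ⟨h0, h1⟩ := hg i true
  obtain ⟨h0', h1'⟩ := hg i false
  dsimp only [u, v]
  rcases le_total (g i true) (g i false) with h | h
  · rw [abs_of_nonpos (by linarith), abs_of_nonneg (by linarith)]; linarith
  · rw [abs_of_nonneg (by linarith), abs_of_nonneg (by linarith)]; linarith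

def pinFactor (g : Fin n → Bool → ℝ) (i : Fin n) (s : Bool) : Fin n → Bool → ℝ :=
  fun j c => if j = i ∧ c ≠ s then 0 else g j c

theorem productFn_pinFactor (g : Fin n → Bool → ℝ) (i : Fin n) (s : Bool) (x : Fin n → Bool) :
    productFn (pinFactor g i s) x = if x i = s then productFn g x else 0 := by
  split_ifs with hx
  · exact prod_congr rfl fun j _ => if_neg fun ⟨hj, hne⟩ => hne (hj ▸ hx)
  · exact prod_eq_zero (mem_univ i) (by simp [pinFactor, hx])

theorem pinFactor_mem_Icc {g : Fin n → Bool → ℝ} (hg : ∀ i b, g i b ∈ Set.Icc (0 : ℝ) 1)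
    (i : Fin n) (s : Bool) (j : Fin n) (c : Bool) : pinFactor g i s j c ∈ Set.Icc (0 : ℝ) 1 := by
  unfold pinFactor
  split_ifs
  · simp
  · exact hg j c

namespace DTree

theorem leaves_pos (T : DTree n) : 0 < T.leaves := by
  induction T with
  | leaf => simp [leaves]
  | node _ _ _ ihl ihr => simp only [leaves]; omega

theorem productFn_mul_eval_node (g : Fin n → Bool → ℝ) (i : Fin n) (l r : DTree n) :
    productFn g * (node i l r).eval
      = productFn (pinFactor g i true) * l.eval + productFn (pinFactor g i false) * r.eval := by
  ext x
  cases hx : x i <;> simp [eval, productFn_pinFactor, hx]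

theorem le_leaves_of_subadditive (Φ : ((Fin n → Bool) → ℝ) → ℝ)
    (hadd : ∀ f h, Φ (f + h) ≤ Φ f + Φ h) (hneg : ∀ f, Φ (-f) = Φ f)
    (hprod : ∀ g : Fin n → Bool → ℝ, (∀ i b, g i b ∈ Set.Icc 0 1) → Φ (productFn g) ≤ 1)
    (T : DTree n) (g : Fin n → Bool → ℝ) (hg : ∀ i b, g i b ∈ Set.Icc 0 1) :
    Φ (productFn g * T.eval) ≤ T.leaves := by
  induction T generalizing g with
  | leaf b =>
    have hleaf : productFn g * (leaf b).eval = if b then productFn g else -productFn g := by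
      ext x; cases b <;> simp [eval]
    rw [hleaf, leaves, Nat.cast_one]
    split_ifs
    · exact hprod g hg
    · exact (hneg _).trans_le (hprod g hg)
  | node i l r ihl ihr =>
    rw [productFn_mul_eval_node, leaves, Nat.cast_add]
    exact (hadd _ _).trans (add_le_add (ihl _ (pinFactor_mem_Icc hg i true))
      (ihr _ (pinFactor_mem_Icc hg i false)))

theorem productFn_one_mul_eval (T : DTree n) : productFn (fun _ _ => 1) * T.eval = T.eval := by
  ext x; simp [productFn]

theorem abs_fourierU_eval_le (T : DTree n) (S : Finset (Fin n)) :
    |fourierU T.eval S| ≤ T.leaves / 2 ^ S.card := by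
  rw [le_div_iff₀ (by positivity), mul_comm, ← productFn_one_mul_eval T]
  refine le_leaves_of_subadditive (fun f => 2 ^ S.card * |fourierU f S|) (fun f h => ?_)
    (fun f => by simp only [fourierU_neg, abs_neg]) (fun g hg => ?_) T _ (fun _ _ => by simp)
  · rw [fourierU_add, ← mul_add]
    exact mul_le_mul_of_nonneg_left (abs_add_le _ _) (by positivity)
  · simpa [← le_div_iff₀' (by positivity : (0 : ℝ) < 2 ^ S.card), div_eq_mul_inv]
      using abs_fourierU_productFn_le hg S

theorem sum_abs_fourierU_eval_le (T : DTree n) :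
    ∑ S, |fourierU T.eval S| ≤ T.leaves := by
  rw [← productFn_one_mul_eval T]
  refine le_leaves_of_subadditive (fun f => ∑ S, |fourierU f S|) (fun f h => ?_)
    (fun f => by simp only [fourierU_neg, abs_neg]) (fun g hg => sum_abs_fourierU_productFn_le hg)
    T _ (fun _ _ => by simp)
  rw [← sum_add_distrib]
  exact sum_le_sum fun S _ => (fourierU_add f h S).symm ▸ abs_add_le _ _

end DTree

theorem sum_sq_le_mul_sum_abs {ι : Type*} {s t : Finset ι} (hst : s ⊆ t) {a : ι → ℝ} {M : ℝ}
    (hM : 0 ≤ M) (ha : ∀ i ∈ s, |a i| ≤ M) : ∑ i ∈ s, a i ^ 2 ≤ M * ∑ i ∈ t, |a i| := by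
  calc ∑ i ∈ s, a i ^ 2 ≤ ∑ i ∈ s, M * |a i| := sum_le_sum fun i hi => by
        rw [← sq_abs, sq]; exact mul_le_mul_of_nonneg_right (ha i hi) (abs_nonneg _)
    _ ≤ M * ∑ i ∈ t, |a i| := by
        rw [← mul_sum]; gcongr

theorem div_two_pow_le_of_logb_le {t τ : ℝ} (ht : 0 < t) (hτ : 0 < τ) {k : ℕ}
    (hk : Real.logb 2 (t ^ 2 / τ) ≤ k) : t / 2 ^ k ≤ τ / t := by
  rw [Real.logb_le_iff_le_rpow one_lt_two (by positivity), Real.rpow_natCast,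
    div_le_iff₀ hτ] at hk
  rw [div_le_div_iff₀ (by positivity) ht]
  nlinarith

end

theorem dtree_fourier_concentration (n t : ℕ) (T : DTree n) (hT : T.leaves = t)
    (τ : ℝ) (hτ : 0 < τ) :
    ∑ S ∈ univ.filter (fun S : Finset (Fin n) =>
        Real.logb 2 ((t : ℝ) ^ 2 / τ) ≤ S.card),
      (fourierU T.eval S) ^ 2 ≤ τ := by
  subst hT
  have ht : (0 : ℝ) < T.leaves := by exact_mod_cast T.leaves_pos
  calc _ ≤ τ / T.leaves * ∑ S, |fourierU T.eval S| :=
        sum_sq_le_mul_sum_abs (subset_univ _) (by positivity) fun S hS =>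
          (T.abs_fourierU_eval_le S).trans (div_two_pow_le_of_logb_le ht hτ (mem_filter.1 hS).2)
    _ ≤ τ / T.leaves * T.leaves := by gcongr; exact T.sum_abs_fourierU_eval_le
    _ = τ := div_mul_cancel₀ τ ht.ne'
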